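/- Let K be a finite d-dimensional simplicial complex, r < d, and ζ a non-bounding r-cycle of K. Let S be an inclusion-minimal set of r-simplices of K that intersects every r-cycle homologous to ζ. Then the subgraph of the Hasse graph of K induced by S — namely the graph whose vertices are the simplices of S together with all (r+1)-simplices of K having a facet in S, and whose edges are the facet–cofacet pairs among these — is connected. -/

import Mathlib

/-!
Suppose the Hasse subgraph is disconnected, let `S₁ ⊊ S` be the simplices of `S` in one
component and `S₂ = S \ S₁ ⊊ S`; then no `(r+1)`-simplex has facets in both `S₁` and `S₂`.
By minimality there are cycles `ρ₁ ~ ζ` avoiding `S₂` and `ρ₂ ~ ζ` avoiding `S₁`. Write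
`ρ₁ + ρ₂ = ∂b` and let `b'` consist of the simplices of `b` having a facet in `S₁`. The cycle
`ρ₁ + ∂b'` is homologous to `ζ`; on `S₁` it agrees with `ρ₁ + ∂b = ρ₂`, and on `S₂` with `ρ₁`,
since `∂b'` vanishes there by separation. So it avoids `S`, a contradiction.
-/

namespace ArxivCut

noncomputable section

attribute [local instance] Classical.propDecidable

open Finset

variable {V : Type*} [Fintype V] [DecidableEq V]

/-- A finite abstract simplicial complex on the vertex type `V`. -/
structure SComplex (V : Type*) [DecidableEq V] where
  faces : Finset (Finset V)
  nonempty_mem : ∀ s ∈ faces, s.Nonempty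
  down_closed : ∀ s ∈ faces, ∀ t ⊆ s, t.Nonempty → t ∈ faces

/-- The boundary of a `𝔽₂`-chain (a chain is identified with its set of simplices):
a simplex `τ` lies in the boundary iff it is a facet of an odd number of members. -/
def bdry (c : Finset (Finset V)) : Finset (Finset V) :=
  Finset.univ.filter fun τ => Odd ((c.filter fun σ => τ ⊆ σ ∧ τ.card + 1 = σ.card)).card

/-- `c` is an `r`-chain of `K` (a set of `r`-simplices of `K`). -/
def IsRChain (K : SComplex V) (r : ℕ) (c : Finset (Finset V)) : Prop :=
  ∀ σ ∈ c, σ ∈ K.faces ∧ σ.card = r + 1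

/-- `c` is an `r`-cycle of `K`. -/
def IsRCycle (K : SComplex V) (r : ℕ) (c : Finset (Finset V)) : Prop :=
  IsRChain K r c ∧ bdry c = ∅

/-- `z` is a bounding `r`-cycle of `K`: it is the boundary of an `(r+1)`-chain of `K`. -/
def IsBounding (K : SComplex V) (r : ℕ) (z : Finset (Finset V)) : Prop :=
  ∃ b, IsRChain K (r + 1) b ∧ bdry b = z

/-- Two `r`-chains are homologous in `K` if their `𝔽₂`-sum (symmetric difference) bounds. -/
def Homologous (K : SComplex V) (r : ℕ) (a b : Finset (Finset V)) : Prop :=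
  IsBounding K r (symmDiff a b)

/-- The subcomplex obtained from `K` by deleting the simplices of `S` together with all
their cofaces. -/
def SComplex.del (K : SComplex V) (S : Finset (Finset V)) : SComplex V where
  faces := K.faces.filter fun σ => ∀ s ∈ S, ¬ s ⊆ σ
  nonempty_mem := fun s hs => K.nonempty_mem s (Finset.mem_filter.mp hs).1
  down_closed := by
    intro s hs t hts htne
    rw [Finset.mem_filter] at hs ⊢
    exact ⟨K.down_closed s hs.1 t hts htne, fun u hu hut => hs.2 u hu (hut.trans hts)⟩

/-- The `𝔽₂`-sum of a (finite) set of chains. -/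
def chainSum (F : Finset (Finset (Finset V))) : Finset (Finset V) :=
  Finset.univ.filter fun σ => Odd ((F.filter fun c => σ ∈ c).card)

/-- `z` lies in the `𝔽₂`-linear span of the chains satisfying `P`. -/
def InSpan (P : Finset (Finset V) → Prop) (z : Finset (Finset V)) : Prop :=
  ∃ F : Finset (Finset (Finset V)), (∀ c ∈ F, P c) ∧ chainSum F = z


/-- The nodes of the subgraph of the Hasse graph of `K` induced by the set `S` of
`r`-simplices: the simplices of `S` together with all `(r+1)`-simplices of `K` having a
facet in `S`. -/
def HasseNode (K : SComplex V) (r : ℕ) (S : Finset (Finset V)) (x : Finset V) : Prop :=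
  x ∈ S ∨ (x ∈ K.faces ∧ x.card = r + 2 ∧ ∃ s ∈ S, s ⊆ x)

/-- Adjacency in the subgraph of the Hasse graph induced by `S`: facet–cofacet pairs among
the nodes. -/
def HasseAdj (K : SComplex V) (r : ℕ) (S : Finset (Finset V)) (x y : Finset V) : Prop :=
  HasseNode K r S x ∧ HasseNode K r S y ∧
    ((x ⊆ y ∧ x.card + 1 = y.card) ∨ (y ⊆ x ∧ y.card + 1 = x.card))


open scoped symmDiff

theorem odd_card_symmDiff_iff {α : Type*} [DecidableEq α] (a b : Finset α) :
    Odd #(a ∆ b) ↔ ¬(Odd #a ↔ Odd #b) := by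
  have hsymm : #(a ∆ b) + #(a ∩ b) = #(a ∪ b) := by
    rw [symmDiff_eq_sup_sdiff_inf]
    exact card_sdiff_add_card_eq_card inter_subset_union
  have hunion := card_union_add_card_inter a b
  simp only [Nat.odd_iff]
  omega

theorem filter_symmDiff {α : Type*} [DecidableEq α] (a b : Finset α) (p : α → Prop)
    [DecidablePred p] : (a ∆ b).filter p = a.filter p ∆ b.filter p := by
  ext x
  simp only [mem_filter, mem_symmDiff]
  tauto

def IsFacet (τ σ : Finset V) : Prop :=
  τ ⊆ σ ∧ τ.card + 1 = σ.card

theorem mem_bdry {c : Finset (Finset V)} {τ : Finset V} :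
    τ ∈ bdry c ↔ Odd #{σ ∈ c | IsFacet τ σ} := by
  unfold bdry IsFacet
  simp only [mem_filter, mem_univ, true_and]
  congr!

theorem exists_isFacet_of_mem_bdry {c : Finset (Finset V)} {τ : Finset V} (h : τ ∈ bdry c) :
    ∃ σ ∈ c, IsFacet τ σ := by
  obtain ⟨σ, hσ⟩ := card_pos.mp (mem_bdry.mp h).pos
  exact ⟨σ, (mem_filter.mp hσ).1, (mem_filter.mp hσ).2⟩

theorem mem_bdry_filter_iff {c : Finset (Finset V)} {τ : Finset V} {p : Finset V → Prop}
    [DecidablePred p] (hp : ∀ σ ∈ c, IsFacet τ σ → p σ) :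
    τ ∈ bdry (c.filter p) ↔ τ ∈ bdry c := by
  rw [mem_bdry, mem_bdry, filter_filter]
  congr! 3 with σ hσ
  exact ⟨And.right, fun h => ⟨hp σ hσ h, h⟩⟩

theorem bdry_symmDiff (a b : Finset (Finset V)) :
    bdry (a ∆ b) = bdry a ∆ bdry b := by
  ext τ
  rw [mem_symmDiff, mem_bdry, mem_bdry, mem_bdry, filter_symmDiff, odd_card_symmDiff_iff]
  tauto

theorem even_card_isFacet_isFacet (τ θ : Finset V) :
    Even #{σ | IsFacet τ σ ∧ IsFacet σ θ} := by
  by_cases h : τ ⊆ θ ∧ τ.card + 2 = θ.card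
  · have hIoo : ({σ | IsFacet τ σ ∧ IsFacet σ θ} : Finset (Finset V)) = Ioo τ θ := by
      ext σ
      rw [mem_filter_univ, mem_Ioo]
      unfold IsFacet
      constructor
      · rintro ⟨⟨hτσ, hτσc⟩, hσθ, hσθc⟩
        exact ⟨ssubset_of_subset_of_ne hτσ (by rintro rfl; omega),
          ssubset_of_subset_of_ne hσθ (by rintro rfl; omega)⟩
      · rintro ⟨hτσ, hσθ⟩
        have := card_lt_card hτσ
        have := card_lt_card hσθ
        exact ⟨⟨hτσ.subset, by omega⟩, hσθ.subset, by omega⟩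
    rw [hIoo, card_Ioo_finset h.1, show θ.card - τ.card = 2 by omega]
    decide
  · have hempty : ({σ | IsFacet τ σ ∧ IsFacet σ θ} : Finset (Finset V)) = ∅ := by
      refine filter_eq_empty_iff.mpr fun σ _ ⟨⟨hτσ, hτσc⟩, hσθ, hσθc⟩ => h ?_
      exact ⟨hτσ.trans hσθ, by omega⟩
    simp [hempty]

theorem bdry_bdry (c : Finset (Finset V)) : bdry (bdry c) = ∅ := by
  ext τ
  simp only [notMem_empty, iff_false, mem_bdry, ← Nat.not_even_iff_odd, not_not]
  have hcount : #{σ ∈ bdry c | IsFacet τ σ}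
      = #{σ ∈ {σ | IsFacet τ σ} | Odd #{θ ∈ c | IsFacet σ θ}} := by
    congr 1
    ext σ
    simp only [mem_filter, mem_univ, true_and, mem_bdry]
    tauto
  rw [hcount, ← Nat.not_odd_iff_even, ← odd_sum_iff_odd_card_odd, Nat.not_odd_iff_even]
  have hswap := sum_card_bipartiteAbove_eq_sum_card_bipartiteBelow IsFacet
    (s := {σ | IsFacet τ σ}) (t := c)
  simp only [bipartiteAbove, bipartiteBelow, filter_filter] at hswap
  rw [hswap]
  exact even_sum _ fun θ _ => even_card_isFacet_isFacet τ θ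

section Homology

variable {K : SComplex V} {r : ℕ}

omit [Fintype V] in
theorem IsRChain.mono {c c' : Finset (Finset V)} (hc : IsRChain K r c) (h : c' ⊆ c) :
    IsRChain K r c' :=
  fun σ hσ => hc σ (h hσ)

omit [Fintype V] in
theorem IsRChain.symmDiff {a b : Finset (Finset V)} (ha : IsRChain K r a)
    (hb : IsRChain K r b) : IsRChain K r (a ∆ b) := by
  intro σ hσ
  rcases mem_symmDiff.mp hσ with ⟨hσa, -⟩ | ⟨hσb, -⟩
  exacts [ha σ hσa, hb σ hσb]

theorem isRChain_bdry {b : Finset (Finset V)} (hb : IsRChain K (r + 1) b) :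
    IsRChain K r (bdry b) := by
  intro τ hτ
  obtain ⟨σ, hσb, hτσ, hcard⟩ := exists_isFacet_of_mem_bdry hτ
  have hσ := hb σ hσb
  have hτ_ne : τ.Nonempty := card_pos.mp (by omega)
  exact ⟨K.down_closed σ hσ.1 τ hτσ hτ_ne, by omega⟩

theorem IsRCycle.symmDiff {a b : Finset (Finset V)} (ha : IsRCycle K r a)
    (hb : IsRCycle K r b) : IsRCycle K r (a ∆ b) :=
  ⟨ha.1.symmDiff hb.1, by rw [bdry_symmDiff, ha.2, hb.2, symmDiff_self, bot_eq_empty]⟩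

theorem isRCycle_bdry {b : Finset (Finset V)} (hb : IsRChain K (r + 1) b) :
    IsRCycle K r (bdry b) :=
  ⟨isRChain_bdry hb, bdry_bdry b⟩

theorem IsBounding.symmDiff {a b : Finset (Finset V)} (ha : IsBounding K r a)
    (hb : IsBounding K r b) : IsBounding K r (a ∆ b) := by
  obtain ⟨ca, hca, rfl⟩ := ha
  obtain ⟨cb, hcb, rfl⟩ := hb
  exact ⟨ca ∆ cb, hca.symmDiff hcb, bdry_symmDiff ca cb⟩

theorem Homologous.symm {a b : Finset (Finset V)} (h : Homologous K r a b) :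
    Homologous K r b a := by
  rwa [Homologous, symmDiff_comm]

theorem Homologous.trans {a b c : Finset (Finset V)} (hab : Homologous K r a b)
    (hbc : Homologous K r b c) : Homologous K r a c := by
  have h := IsBounding.symmDiff hab hbc
  rwa [symmDiff_assoc, symmDiff_symmDiff_cancel_left] at h

theorem homologous_symmDiff_bdry (a : Finset (Finset V)) {b : Finset (Finset V)}
    (hb : IsRChain K (r + 1) b) : Homologous K r (a ∆ bdry b) a := by
  rw [Homologous, symmDiff_symmDiff_self']
  exact ⟨b, hb, rfl⟩

def NoCommonCofacet (K : SComplex V) (r : ℕ) (S₁ S₂ : Finset (Finset V)) : Prop :=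
  ∀ θ ∈ K.faces, θ.card = r + 2 → ∀ s₁ ∈ S₁, s₁ ⊆ θ → ∀ s₂ ∈ S₂, ¬ s₂ ⊆ θ

theorem exists_isRCycle_agree_of_noCommonCofacet {S₁ S₂ ρ₁ ρ₂ : Finset (Finset V)}
    (hsep : NoCommonCofacet K r S₁ S₂)
    (hρ₁ : IsRCycle K r ρ₁) (h₁₂ : Homologous K r ρ₁ ρ₂) :
    ∃ ρ, IsRCycle K r ρ ∧ Homologous K r ρ ρ₁ ∧
      (∀ s ∈ S₁, s ∈ ρ ↔ s ∈ ρ₂) ∧ (∀ s ∈ S₂, s ∈ ρ ↔ s ∈ ρ₁) := by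
  obtain ⟨b, hb, hbdry⟩ := h₁₂
  set b' := b.filter fun θ => ∃ s₁ ∈ S₁, s₁ ⊆ θ
  have hb' : IsRChain K (r + 1) b' := hb.mono (filter_subset _ _)
  refine ⟨ρ₁ ∆ bdry b', hρ₁.symmDiff (isRCycle_bdry hb'), homologous_symmDiff_bdry ρ₁ hb',
    fun s hs => ?_, fun s hs => ?_⟩
  · have hagree : s ∈ bdry b' ↔ s ∈ bdry b :=
      mem_bdry_filter_iff fun θ _ hsθ => ⟨s, hs, hsθ.1⟩
    rw [mem_symmDiff, hagree, hbdry, mem_symmDiff]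
    tauto
  · have hnot : s ∉ bdry b' := by
      intro h
      obtain ⟨θ, hθb', hsθ, -⟩ := exists_isFacet_of_mem_bdry h
      obtain ⟨hθb, s₁, hs₁, hs₁θ⟩ := mem_filter.mp hθb'
      exact hsep θ (hb θ hθb).1 (hb θ hθb).2 s₁ hs₁ hs₁θ s hs hsθ
    rw [mem_symmDiff]
    tauto

def MeetsHomologyClass (K : SComplex V) (r : ℕ) (ζ S : Finset (Finset V)) : Prop :=
  ∀ ρ, IsRCycle K r ρ → Homologous K r ρ ζ → ∃ s ∈ S, s ∈ ρ

theorem MeetsHomologyClass.left_or_right_of_noCommonCofacet {ζ S₁ S₂ : Finset (Finset V)}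
    (hsep : NoCommonCofacet K r S₁ S₂)
    (h : MeetsHomologyClass K r ζ (S₁ ∪ S₂)) :
    MeetsHomologyClass K r ζ S₁ ∨ MeetsHomologyClass K r ζ S₂ := by
  unfold MeetsHomologyClass at h ⊢
  by_contra! hne
  obtain ⟨⟨ρ₂, hρ₂, hρ₂ζ, hρ₂S₁⟩, ⟨ρ₁, hρ₁, hρ₁ζ, hρ₁S₂⟩⟩ := hne
  obtain ⟨ρ, hρ, hρρ₁, hρS₁, hρS₂⟩ :=
    exists_isRCycle_agree_of_noCommonCofacet hsep hρ₁ (hρ₁ζ.trans hρ₂ζ.symm)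
  obtain ⟨s, hs, hsρ⟩ := h ρ hρ (hρρ₁.trans hρ₁ζ)
  rcases mem_union.mp hs with hs₁ | hs₂
  · exact hρ₂S₁ s hs₁ ((hρS₁ s hs₁).mp hsρ)
  · exact hρ₁S₂ s hs₂ ((hρS₂ s hs₂).mp hsρ)

end Homology

section Hasse

variable {K : SComplex V} {r : ℕ} {S : Finset (Finset V)}

omit [Fintype V] in
instance : Std.Symm (HasseAdj K r S) :=
  ⟨fun _ _ h => ⟨h.2.1, h.1, h.2.2.symm⟩⟩

omit [Fintype V] in
theorem reflTransGen_hasseAdj_of_subset_cofacet (hS : ∀ s ∈ S, s.card = r + 1)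
    {θ s₁ s₂ : Finset V} (hθ : θ ∈ K.faces) (hθc : θ.card = r + 2) (hs₁ : s₁ ∈ S)
    (hs₂ : s₂ ∈ S) (hs₁θ : s₁ ⊆ θ) (hs₂θ : s₂ ⊆ θ) :
    Relation.ReflTransGen (HasseAdj K r S) s₁ s₂ := by
  have hθnode : HasseNode K r S θ := Or.inr ⟨hθ, hθc, s₁, hs₁, hs₁θ⟩
  have h₁ : HasseAdj K r S s₁ θ :=
    ⟨Or.inl hs₁, hθnode, Or.inl ⟨hs₁θ, by rw [hS s₁ hs₁, hθc]⟩⟩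
  have h₂ : HasseAdj K r S θ s₂ :=
    ⟨hθnode, Or.inl hs₂, Or.inr ⟨hs₂θ, by rw [hS s₂ hs₂, hθc]⟩⟩
  exact .tail (.single h₁) h₂

omit [Fintype V] in
theorem HasseNode.exists_reflTransGen (hS : ∀ s ∈ S, s.card = r + 1) {x : Finset V}
    (hx : HasseNode K r S x) : ∃ s ∈ S, Relation.ReflTransGen (HasseAdj K r S) x s := by
  rcases hx with hxS | ⟨hxK, hxc, s, hs, hsx⟩
  · exact ⟨x, hxS, .refl⟩
  · exact ⟨s, hs, .single ⟨Or.inr ⟨hxK, hxc, s, hs, hsx⟩, Or.inl hs,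
      Or.inr ⟨hsx, by rw [hS s hs, hxc]⟩⟩⟩

end Hasse

theorem statement10_general (K : SComplex V) (r : ℕ)
    (ζ : Finset (Finset V))
    (S : Finset (Finset V)) (hS : ∀ s ∈ S, s ∈ K.faces ∧ s.card = r + 1)
    (hfeas : ∀ ρ, IsRCycle K r ρ → Homologous K r ρ ζ → ∃ s ∈ S, s ∈ ρ)
    (hmin : ∀ S', S' ⊂ S →
      ¬ ∀ ρ, IsRCycle K r ρ → Homologous K r ρ ζ → ∃ s ∈ S', s ∈ ρ) :
    ∀ x y, HasseNode K r S x → HasseNode K r S y →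
      Relation.ReflTransGen (HasseAdj K r S) x y := by
  have hScard : ∀ s ∈ S, s.card = r + 1 := fun s hs => (hS s hs).2
  suffices hconn : ∀ s₀ ∈ S, ∀ t ∈ S, Relation.ReflTransGen (HasseAdj K r S) s₀ t by
    intro x y hx hy
    obtain ⟨s, hs, hxs⟩ := hx.exists_reflTransGen hScard
    obtain ⟨t, ht, hyt⟩ := hy.exists_reflTransGen hScard
    exact hxs.trans ((hconn s hs t ht).trans (Std.Symm.symm _ _ hyt))
  intro s₀ hs₀ t ht
  by_contra hs₀t
  set S₁ := {s ∈ S | Relation.ReflTransGen (HasseAdj K r S) s₀ s}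
  have hsep : NoCommonCofacet K r S₁ (S \ S₁) := by
    intro θ hθ hθc s₁ hs₁ hs₁θ s₂ hs₂ hs₂θ
    rw [mem_filter] at hs₁
    rw [mem_sdiff, mem_filter] at hs₂
    exact hs₂.2 ⟨hs₂.1, hs₁.2.trans
      (reflTransGen_hasseAdj_of_subset_cofacet hScard hθ hθc hs₁.1 hs₂.1 hs₁θ hs₂θ)⟩
  have hmeets : MeetsHomologyClass K r ζ (S₁ ∪ S \ S₁) := by
    rwa [union_sdiff_of_subset (filter_subset _ _)]
  rcases hmeets.left_or_right_of_noCommonCofacet hsep with hS₁ | hS₂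
  · refine hmin S₁ ((ssubset_iff_of_subset (filter_subset _ _)).mpr ⟨t, ht, ?_⟩) hS₁
    exact fun htS₁ => hs₀t (mem_filter.mp htS₁).2
  · refine hmin (S \ S₁) ((ssubset_iff_of_subset sdiff_subset).mpr ⟨s₀, hs₀, ?_⟩) hS₂
    exact fun hs₀S₂ => (mem_sdiff.mp hs₀S₂).2 (mem_filter.mpr ⟨hs₀, .refl⟩)

/-- Let `K` be a finite `d`-dimensional simplicial complex, `r < d`, and
`ζ` a non-bounding `r`-cycle of `K`.  Let `S` be an inclusion-minimal set of `r`-simplices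
of `K` intersecting every `r`-cycle homologous to `ζ`.  Then the subgraph of the Hasse
graph of `K` induced by `S` is connected. -/
theorem statement10 (K : SComplex V) (d r : ℕ)
    (hdim : ∀ s ∈ K.faces, s.card ≤ d + 1) (hr : r < d)
    (ζ : Finset (Finset V)) (hζcyc : IsRCycle K r ζ) (hζnb : ¬ IsBounding K r ζ)
    (S : Finset (Finset V)) (hS : ∀ s ∈ S, s ∈ K.faces ∧ s.card = r + 1)
    (hfeas : ∀ ρ, IsRCycle K r ρ → Homologous K r ρ ζ → ∃ s ∈ S, s ∈ ρ)
    (hmin : ∀ S', S' ⊂ S →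
      ¬ ∀ ρ, IsRCycle K r ρ → Homologous K r ρ ζ → ∃ s ∈ S', s ∈ ρ) :
    ∀ x y, HasseNode K r S x → HasseNode K r S y →
      Relation.ReflTransGen (HasseAdj K r S) x y :=
  statement10_general K r ζ S hS hfeas hmin

end

end ArxivCut
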